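/- Let A be a bounded linear operator on H. Then for every real number r ≥ 1 and every α ∈ [0,1], ber(A)^{2r} ≤ ber(α·((|A| + |A*|)/2)^{2r} + (1−α)·|A*|^{2r}). -/

import Mathlib

set_option synthInstance.maxHeartbeats 1000000
set_option maxHeartbeats 1000000

open scoped NNReal
open ContinuousLinearMap

/-- The Berezin number of an operator `T`, relative to the family `k` of
(normalized reproducing kernel) vectors indexed by `Ω`. -/
noncomputable def ber {H : Type*} [NormedAddCommGroup H] [InnerProductSpace ℂ H]
    {Ω : Type*} (k : Ω → H) (T : H →L[ℂ] H) : ℝ :=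
  ⨆ lam : Ω, ‖(inner ℂ (T (k lam)) (k lam) : ℂ)‖

/-- The absolute value `|T| = (T*T)^(1/2)` of a bounded operator. -/
noncomputable def opAbs {H : Type*} [NormedAddCommGroup H] [InnerProductSpace ℂ H]
    [CompleteSpace H] (T : H →L[ℂ] H) : H →L[ℂ] H :=
  CFC.sqrt (adjoint T * T)

/-!
For a unit vector `x` let `c = |⟨A x, x⟩|`. The mixed Schwarz inequality
`c² ≤ ⟨|A| x, x⟩ ⟨|A*| x, x⟩` and AM-GM give `c ≤ ⟨D x, x⟩` with `D = (|A| + |A*|) / 2`, while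
`c ≤ ‖A* x‖` gives `c² ≤ ⟨|A*|² x, x⟩`. McCarthy's inequality `⟨T x, x⟩ ^ p ≤ ⟨T ^ p x, x⟩`
(`T ≥ 0`, `p ≥ 1`, from a tangent line of `t ↦ t ^ p`) raises these to `c ^ (2r)`; a convex
combination of the two bounds and the supremum over `x = k̂_λ` finish the proof.

Without a polar decomposition, mixed Schwarz comes from factoring `A` through
`(|A|² + ε) ^ (1/4)` and letting `ε → 0`; this needs `A f(A*A) = f(AA*) A` for continuous `f`,
which follows from the polynomial case by Stone-Weierstrass.
-/

open scoped InnerProductSpace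
open RCLike

section Intertwining

variable {A : Type*} [Ring A] [StarRing A] [Algebra ℝ A] [TopologicalSpace A]
  [ContinuousFunctionalCalculus ℝ A IsSelfAdjoint] [IsTopologicalRing A] [T2Space A]

theorem SemiconjBy.cfc_real {b x y : A} (h : SemiconjBy b x y) (hx : IsSelfAdjoint x)
    (hy : IsSelfAdjoint y) {f : ℝ → ℝ} (hfx : ContinuousOn f (spectrum ℝ x))
    (hfy : ContinuousOn f (spectrum ℝ y)) :
    SemiconjBy b (cfc f x) (cfc f y) := by
  set s := spectrum ℝ x ∪ spectrum ℝ y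
  have : CompactSpace s := isCompact_iff_compactSpace.mp
    ((ContinuousFunctionalCalculus.isCompact_spectrum x).union
      (ContinuousFunctionalCalculus.isCompact_spectrum y))
  have key : ∀ F : C(s, ℝ), SemiconjBy b (cfcHomSuperset hx Set.subset_union_left F)
      (cfcHomSuperset hy Set.subset_union_right F) := by
    intro F
    induction F using ContinuousMap.induction_on_of_compact with
    | const r =>
      have : ContinuousMap.const s r = algebraMap ℝ C(s, ℝ) r := rfl
      rw [this, AlgHomClass.commutes, AlgHomClass.commutes]
      exact Algebra.commute_algebraMap_right r b
    | id => rwa [cfcHomSuperset_id, cfcHomSuperset_id]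
    | star_id =>
      rwa [map_star, map_star, cfcHomSuperset_id, cfcHomSuperset_id, hx.star_eq, hy.star_eq]
    | add f g hf hg => simpa only [map_add] using hf.add_right hg
    | mul f g hf hg => simpa only [map_mul] using hf.mul_right hg
    | frequently F hF =>
      have hclosed : IsClosed {G : C(s, ℝ) | b * cfcHomSuperset hx Set.subset_union_left G
          = cfcHomSuperset hy Set.subset_union_right G * b} :=
        isClosed_eq ((cfcHomSuperset_continuous hx _).const_mul b)
          ((cfcHomSuperset_continuous hy _).mul_const b)
      exact hclosed.closure_subset (mem_closure_of_frequently_of_tendsto hF Filter.tendsto_id)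
  have hf : ContinuousOn f s := hfx.union_of_isClosed hfy
    (ContinuousFunctionalCalculus.isCompact_spectrum x).isClosed
    (ContinuousFunctionalCalculus.isCompact_spectrum y).isClosed
  convert key ⟨s.domRestrict f, hf.domRestrict⟩ using 1
  · rw [cfc_apply f x]; rfl
  · rw [cfc_apply f y]; rfl

theorem mul_cfc_star_mul_self_mul_star (a : A) {g : ℝ → ℝ}
    (hg₁ : ContinuousOn g (spectrum ℝ (star a * a)))
    (hg₂ : ContinuousOn g (spectrum ℝ (a * star a))) :
    a * cfc g (star a * a) * star a = cfc (fun t => g t * t) (a * star a) := by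
  have h : SemiconjBy a (star a * a) (a * star a) := (mul_assoc a (star a) a).symm
  rw [(h.cfc_real (.star_mul_self a) (.mul_star_self a) hg₁ hg₂).eq, mul_assoc,
    cfc_mul g (fun t => t) _ hg₂, cfc_id' ℝ (a * star a)]

end Intertwining

theorem rpow_tangent_le {c t p : ℝ} (hc : 0 < c) (ht : 0 ≤ t) (hp : 1 ≤ p) :
    c ^ p + p * c ^ (p - 1) * (t - c) ≤ t ^ p := by
  have hs : -1 ≤ t / c - 1 := by linarith [div_nonneg ht hc.le]
  calc c ^ p + p * c ^ (p - 1) * (t - c) = c ^ p * (1 + p * (t / c - 1)) := by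
        rw [Real.rpow_sub_one hc.ne']
        field_simp
    _ ≤ c ^ p * (1 + (t / c - 1)) ^ p :=
        mul_le_mul_of_nonneg_left (one_add_mul_self_le_rpow_one_add hs hp)
          (Real.rpow_nonneg hc.le p)
    _ = t ^ p := by
        rw [add_sub_cancel, Real.div_rpow ht hc.le,
          mul_div_cancel₀ _ (Real.rpow_pos_of_pos hc p).ne']

section Operators

variable {H : Type*} [NormedAddCommGroup H] [InnerProductSpace ℂ H]

theorem re_inner_nonneg_of_nonneg {T : H →L[ℂ] H} (hT : 0 ≤ T) (x : H) :
    0 ≤ re ⟪T x, x⟫_ℂ :=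
  ((nonneg_iff_isPositive T).mp hT).re_inner_nonneg_left x

theorem re_inner_le_re_inner_of_le {S T : H →L[ℂ] H} (h : S ≤ T) (x : H) :
    re ⟪S x, x⟫_ℂ ≤ re ⟪T x, x⟫_ℂ := by
  have := ((le_def S T).mp h).re_inner_nonneg_left x
  rwa [sub_apply, inner_sub_left, map_sub, sub_nonneg] at this

theorem re_inner_real_smul_left (c : ℝ) (u v : H) :
    re ⟪c • u, v⟫_ℂ = c * re ⟪u, v⟫_ℂ := by
  rw [real_smul_eq_coe_smul (K := ℂ), inner_smul_left, conj_ofReal, re_ofReal_mul]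

theorem le_re_inner_smul_add_one_sub_smul {X Y : H →L[ℂ] H} {x : H} {c α : ℝ} (hα₀ : 0 ≤ α)
    (hα₁ : α ≤ 1) (hX : c ≤ re ⟪X x, x⟫_ℂ) (hY : c ≤ re ⟪Y x, x⟫_ℂ) :
    c ≤ re ⟪(α • X + (1 - α) • Y) x, x⟫_ℂ := by
  rw [add_apply, smul_apply, smul_apply, inner_add_left, map_add, re_inner_real_smul_left,
    re_inner_real_smul_left]
  nlinarith

variable [CompleteSpace H]

theorem re_inner_cfc_add_const {T : H →L[ℂ] H} (hT : IsSelfAdjoint T) {f : ℝ → ℝ}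
    (hf : ContinuousOn f (spectrum ℝ T)) (a : ℝ) (x : H) :
    re ⟪cfc (fun t => f t + a) T x, x⟫_ℂ = re ⟪cfc f T x, x⟫_ℂ + a * ‖x‖ ^ 2 := by
  rw [cfc_add T f (fun _ => a), cfc_const a T, Algebra.algebraMap_eq_smul_one, add_apply,
    smul_apply, one_apply_eq_self, inner_add_left, map_add, re_inner_real_smul_left,
    inner_self_eq_norm_sq]

theorem rpow_re_inner_le_re_inner_rpow {T : H →L[ℂ] H} (hT : 0 ≤ T) {x : H} (hx : ‖x‖ = 1)
    {p : ℝ} (hp : 1 ≤ p) : re ⟪T x, x⟫_ℂ ^ p ≤ re ⟪(T ^ p) x, x⟫_ℂ := by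
  rcases (re_inner_nonneg_of_nonneg hT x).eq_or_lt with hc | hc
  · rw [← hc, Real.zero_rpow (by linarith)]
    exact re_inner_nonneg_of_nonneg CFC.rpow_nonneg x
  set c := re ⟪T x, x⟫_ℂ
  have htangent : cfc (fun t => p * c ^ (p - 1) * t + (c ^ p - p * c ^ (p - 1) * c)) T ≤
      cfc (fun t : ℝ => t ^ p) T :=
    cfc_mono (fun t ht => by linarith [rpow_tangent_le hc (spectrum_nonneg_of_nonneg hT ht) hp])
      (hg := (Real.continuous_rpow_const (by linarith)).continuousOn)
  have := re_inner_le_re_inner_of_le htangent x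
  rwa [re_inner_cfc_add_const hT.isSelfAdjoint (by fun_prop), cfc_const_mul _ _ T, cfc_id' ℝ T,
    smul_apply, re_inner_real_smul_left, hx, ← CFC.rpow_eq_cfc_real hT, one_pow, mul_one,
    add_sub_cancel] at this

theorem adjoint_mul_self_nonneg (T : H →L[ℂ] H) : 0 ≤ adjoint T * T := star_mul_self_nonneg T

theorem mul_adjoint_nonneg (T : H →L[ℂ] H) : 0 ≤ T * adjoint T := mul_star_self_nonneg T

theorem opAbs_eq_cfc_sqrt (T : H →L[ℂ] H) : opAbs T = cfc Real.sqrt (adjoint T * T) := by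
  rw [opAbs, CFC.sqrt_eq_real_sqrt _ (adjoint_mul_self_nonneg T), cfcₙ_eq_cfc]

theorem continuousOn_inv_sqrt_add {T : H →L[ℂ] H} (hT : 0 ≤ T) {ε : ℝ} (hε : 0 < ε) :
    ContinuousOn (fun t => (√(t + ε))⁻¹) (spectrum ℝ T) :=
  ContinuousOn.inv₀ (by fun_prop) fun t ht =>
    (Real.sqrt_pos.mpr (by linarith [spectrum_nonneg_of_nonneg hT ht])).ne'

theorem norm_inner_sq_le_regularized (A : H →L[ℂ] H) (x : H) {ε : ℝ} (hε : 0 < ε) :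
    ‖⟪A x, x⟫_ℂ‖ ^ 2 ≤ re ⟪cfc (fun t => √(t + ε)) (adjoint A * A) x, x⟫_ℂ *
      re ⟪cfc (fun t => (√(t + ε))⁻¹ * t) (A * adjoint A) x, x⟫_ℂ := by
  set P := adjoint A * A
  have hP := adjoint_mul_self_nonneg A
  have hQ := mul_adjoint_nonneg A
  -- Factor `A = (A * k P) * h P` with `k = h⁻¹`.
  set h : ℝ → ℝ := fun t => √√(t + ε)
  have hne : ∀ t ∈ spectrum ℝ P, h t ≠ 0 := fun t ht =>
    (Real.sqrt_pos.mpr (Real.sqrt_pos.mpr (by linarith [spectrum_nonneg_of_nonneg hP ht]))).ne'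
  have hh : ContinuousOn h (spectrum ℝ P) := by fun_prop
  have hk : ContinuousOn h⁻¹ (spectrum ℝ P) := hh.inv₀ hne
  have hkh : cfc h⁻¹ P * cfc h P = 1 := by
    rw [← cfc_mul _ _ P hk hh, ← cfc_const_one ℝ P]
    exact cfc_congr fun t ht => inv_mul_cancel₀ (hne t ht)
  have hsq_h : cfc h P * cfc h P = cfc (fun t => √(t + ε)) P := by
    rw [← cfc_mul _ _ P hh hh]
    exact cfc_congr fun t _ => Real.mul_self_sqrt (Real.sqrt_nonneg _)
  have hsq_k : cfc h⁻¹ P * cfc h⁻¹ P = cfc (fun t => (√(t + ε))⁻¹) P := by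
    rw [← cfc_mul _ _ P hk hk]
    refine cfc_congr fun t _ => ?_
    simp only [Pi.inv_apply, h, ← mul_inv, Real.mul_self_sqrt (Real.sqrt_nonneg _)]
  have hsa_h : IsSelfAdjoint (cfc h P) := cfc_predicate h P
  have hsa_k : IsSelfAdjoint (cfc h⁻¹ P) := cfc_predicate _ P
  set B := A * cfc h⁻¹ P
  have hB : B * adjoint B = cfc (fun t => (√(t + ε))⁻¹ * t) (A * adjoint A) := by
    calc B * adjoint B = A * (cfc h⁻¹ P * cfc h⁻¹ P) * adjoint A := by
          rw [← star_eq_adjoint, star_mul, star_eq_adjoint, star_eq_adjoint, hsa_k.adjoint_eq]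
          noncomm_ring
      _ = _ := by
          rw [hsq_k]
          exact mul_cfc_star_mul_self_mul_star A (continuousOn_inv_sqrt_add hP hε)
            (continuousOn_inv_sqrt_add hQ hε)
  calc ‖⟪A x, x⟫_ℂ‖ ^ 2 = ‖⟪cfc h P x, adjoint B x⟫_ℂ‖ ^ 2 := by
        rw [adjoint_inner_right, ← mul_apply_eq_comp, mul_assoc, hkh, mul_one]
    _ ≤ (‖cfc h P x‖ * ‖adjoint B x‖) ^ 2 := by gcongr; exact norm_inner_le_norm _ _
    _ = _ := by
        rw [mul_pow, apply_norm_sq_eq_inner_adjoint_left, apply_norm_sq_eq_inner_adjoint_left,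
          adjoint_adjoint, hsa_h.adjoint_eq]
        exact congr_arg₂ _ (by rw [← hsq_h]; rfl) (by rw [← hB]; rfl)

theorem opAbs_nonneg (T : H →L[ℂ] H) : 0 ≤ opAbs T := CFC.sqrt_nonneg _

theorem norm_inner_sq_le_opAbs_add (A : H →L[ℂ] H) (x : H) {η : ℝ} (hη : 0 < η) :
    ‖⟪A x, x⟫_ℂ‖ ^ 2 ≤
      (re ⟪opAbs A x, x⟫_ℂ + η * ‖x‖ ^ 2) * re ⟪opAbs (adjoint A) x, x⟫_ℂ := by
  have hP := adjoint_mul_self_nonneg A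
  have hQ := mul_adjoint_nonneg A
  have hfirst : cfc (fun t => √(t + η ^ 2)) (adjoint A * A) ≤
      cfc (fun t => √t + η) (adjoint A * A) :=
    cfc_mono fun t ht => Real.sqrt_le_iff.mpr ⟨by positivity, by
      nlinarith [Real.sq_sqrt (spectrum_nonneg_of_nonneg hP ht), Real.sqrt_nonneg t]⟩
  have hsecond : cfc (fun t => (√(t + η ^ 2))⁻¹ * t) (A * adjoint A) ≤
      cfc Real.sqrt (A * adjoint A) := by
    refine cfc_mono (fun t ht => ?_)
      (hf := (continuousOn_inv_sqrt_add hQ (by positivity)).mul continuousOn_id)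
    have ht := spectrum_nonneg_of_nonneg hQ ht
    rw [inv_mul_le_iff₀ (Real.sqrt_pos.mpr (by positivity))]
    nlinarith [Real.mul_self_sqrt ht, Real.sqrt_nonneg t,
      Real.sqrt_le_sqrt (le_add_of_nonneg_right (sq_nonneg η) : t ≤ t + η ^ 2)]
  have h₁ := re_inner_le_re_inner_of_le hfirst x
  rw [re_inner_cfc_add_const hP.isSelfAdjoint (by fun_prop)] at h₁
  rw [opAbs_eq_cfc_sqrt, opAbs_eq_cfc_sqrt, adjoint_adjoint]
  refine (norm_inner_sq_le_regularized A x (by positivity)).trans (mul_le_mul h₁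
    (re_inner_le_re_inner_of_le hsecond x) ?_ ?_)
  · exact re_inner_nonneg_of_nonneg (cfc_nonneg fun t ht =>
      mul_nonneg (inv_nonneg.mpr (Real.sqrt_nonneg _)) (spectrum_nonneg_of_nonneg hQ ht)) x
  · have := re_inner_nonneg_of_nonneg (opAbs_nonneg A) x
    rw [opAbs_eq_cfc_sqrt] at this
    positivity

theorem norm_inner_sq_le_opAbs (A : H →L[ℂ] H) (x : H) :
    ‖⟪A x, x⟫_ℂ‖ ^ 2 ≤ re ⟪opAbs A x, x⟫_ℂ * re ⟪opAbs (adjoint A) x, x⟫_ℂ := by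
  refine ge_of_tendsto ?_ (eventually_nhdsWithin_of_forall (s := Set.Ioi (0 : ℝ)) (a := 0)
    fun η hη => norm_inner_sq_le_opAbs_add A x hη)
  exact (Continuous.tendsto' (by fun_prop) 0 _ (by simp)).mono_left nhdsWithin_le_nhds

theorem norm_inner_le_re_inner_mean_opAbs (A : H →L[ℂ] H) (x : H) :
    ‖⟪A x, x⟫_ℂ‖ ≤ re ⟪((2 : ℝ)⁻¹ • (opAbs A + opAbs (adjoint A))) x, x⟫_ℂ := by
  rw [smul_apply, re_inner_real_smul_left, add_apply, inner_add_left, map_add]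
  nlinarith [norm_inner_sq_le_opAbs A x, norm_nonneg ⟪A x, x⟫_ℂ,
    re_inner_nonneg_of_nonneg (opAbs_nonneg A) x,
    re_inner_nonneg_of_nonneg (opAbs_nonneg (adjoint A)) x,
    sq_nonneg (re ⟪opAbs A x, x⟫_ℂ - re ⟪opAbs (adjoint A) x, x⟫_ℂ)]

theorem norm_inner_rpow_le_re_inner_mean_opAbs_rpow (A : H →L[ℂ] H) {x : H} (hx : ‖x‖ = 1)
    {p : ℝ} (hp : 1 ≤ p) :
    ‖⟪A x, x⟫_ℂ‖ ^ p ≤ re ⟪(((2 : ℝ)⁻¹ • (opAbs A + opAbs (adjoint A))) ^ p) x, x⟫_ℂ :=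
  (Real.rpow_le_rpow (norm_nonneg _) (norm_inner_le_re_inner_mean_opAbs A x) (by linarith)).trans
    (rpow_re_inner_le_re_inner_rpow
      (smul_nonneg (by norm_num) (add_nonneg (opAbs_nonneg A) (opAbs_nonneg _))) hx hp)

theorem opAbs_adjoint_rpow (T : H →L[ℂ] H) {r : ℝ} (hr : 0 ≤ r) :
    opAbs (adjoint T) ^ (2 * r) = (T * adjoint T) ^ r := by
  rw [opAbs, adjoint_adjoint]
  convert CFC.rpow_sqrt_nnreal (a := T * adjoint T) (x := ⟨2 * r, by positivity⟩)
    (mul_adjoint_nonneg T) using 2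
  · rfl
  · exact (mul_div_cancel_left₀ r two_ne_zero).symm

theorem norm_inner_sq_le_re_inner_mul_adjoint (A : H →L[ℂ] H) {x : H} (hx : ‖x‖ = 1) :
    ‖⟪A x, x⟫_ℂ‖ ^ 2 ≤ re ⟪(A * adjoint A) x, x⟫_ℂ := by
  have h : ‖⟪A x, x⟫_ℂ‖ ≤ ‖adjoint A x‖ := by
    simpa [← adjoint_inner_right, hx] using norm_inner_le_norm (𝕜 := ℂ) x (adjoint A x)
  calc ‖⟪A x, x⟫_ℂ‖ ^ 2 ≤ ‖adjoint A x‖ ^ 2 := by gcongr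
    _ = re ⟪(A * adjoint A) x, x⟫_ℂ := by
        rw [apply_norm_sq_eq_inner_adjoint_left, adjoint_adjoint]; rfl

theorem norm_inner_rpow_le_re_inner_opAbs_adjoint_rpow (A : H →L[ℂ] H) {x : H} (hx : ‖x‖ = 1)
    {r : ℝ} (hr : 1 ≤ r) :
    ‖⟪A x, x⟫_ℂ‖ ^ (2 * r) ≤ re ⟪(opAbs (adjoint A) ^ (2 * r)) x, x⟫_ℂ := by
  rw [opAbs_adjoint_rpow A (by linarith), Real.rpow_mul (norm_nonneg _), Real.rpow_two]
  exact (Real.rpow_le_rpow (sq_nonneg _) (norm_inner_sq_le_re_inner_mul_adjoint A hx)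
    (by linarith)).trans (rpow_re_inner_le_re_inner_rpow (mul_adjoint_nonneg A) hx hr)

end Operators

section Berezin

variable {H : Type*} [NormedAddCommGroup H] [InnerProductSpace ℂ H] {Ω : Type*} (k : Ω → H)

theorem norm_inner_le_ber (hk : ∀ lam, ‖k lam‖ ≤ 1) (T : H →L[ℂ] H) (lam : Ω) :
    ‖⟪T (k lam), k lam⟫_ℂ‖ ≤ ber k T := by
  refine le_ciSup (f := fun μ => ‖⟪T (k μ), k μ⟫_ℂ‖) ⟨‖T‖, Set.forall_mem_range.2 fun μ => ?_⟩ lam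
  calc ‖⟪T (k μ), k μ⟫_ℂ‖ ≤ ‖T (k μ)‖ * ‖k μ‖ := norm_inner_le_norm _ _
    _ ≤ ‖T‖ * 1 * 1 := by gcongr; exacts [T.le_opNorm_of_le (hk μ), hk μ]
    _ = ‖T‖ := by ring

theorem ber_rpow_le_of_forall [Nonempty Ω] (T : H →L[ℂ] H) {p M : ℝ} (hp : 0 < p)
    (h : ∀ lam, ‖⟪T (k lam), k lam⟫_ℂ‖ ^ p ≤ M) : ber k T ^ p ≤ M := by
  have hM : 0 ≤ M := (Real.rpow_nonneg (norm_nonneg _) p).trans (h (Classical.arbitrary Ω))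
  refine (Real.le_rpow_inv_iff_of_pos (Real.iSup_nonneg fun _ => norm_nonneg _) hM hp).mp ?_
  exact ciSup_le fun lam => (Real.le_rpow_inv_iff_of_pos (norm_nonneg _) hM hp).mpr (h lam)

end Berezin

theorem berezin_power_inequality_mean_abs
    {H : Type*} [NormedAddCommGroup H] [InnerProductSpace ℂ H] [CompleteSpace H]
    {Ω : Type*} [Nonempty Ω] (k : Ω → H) (hk : ∀ lam, ‖k lam‖ = 1)
    (A : H →L[ℂ] H) (r : ℝ) (hr : 1 ≤ r) (α : ℝ) (hα : α ∈ Set.Icc (0 : ℝ) 1) :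
    ber k A ^ (2 * r) ≤
      ber k (α • CFC.rpow ((2 : ℝ)⁻¹ • (opAbs A + opAbs (adjoint A))) (2 * r)
        + (1 - α) • CFC.rpow (opAbs (adjoint A)) (2 * r)) := by
  simp only [CFC.rpow_eq_pow]
  refine ber_rpow_le_of_forall k A (by linarith) fun lam => ?_
  refine le_trans ?_ ((re_le_norm _).trans (norm_inner_le_ber k (fun lam => (hk lam).le) _ lam))
  exact le_re_inner_smul_add_one_sub_smul hα.1 hα.2
    (norm_inner_rpow_le_re_inner_mean_opAbs_rpow A (hk lam) (by linarith))
    (norm_inner_rpow_le_re_inner_opAbs_adjoint_rpow A (hk lam) hr)
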